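/- Consider two workers with data points x₁ = (100, 1) and x₂ = (−100, 1) in ℝ², local losses F_n(w) = log(1 + exp(−⟨w, x_n⟩)), aggregation weights 1/2, learning rate η > 0, and initial model w⁰ = (0, 1). Let c = e^{−1}/(1 + e^{−1}). The workers run Top-1 sparsified gradient descent with error accumulation: ε_n⁰ = 0; at each iteration t, a_n^t = ε_n^t + ∇F_n(w^t), the mask s_n^t selects the single entry of a_n^t of largest absolute value, ĝ_n^t = s_n^t ⊙ a_n^t, ε_n^{t+1} = a_n^t − ĝ_n^t, the server aggregates g^t = (ĝ_1^t + ĝ_2^t)/2, and w^{t+1} = w^t − η g^t. Then for all 0 ≤ t ≤ 98: w^t = (0, 1), ∇F_1(w^t) = −c·(100, 1) and ∇F_2(w^t) = −c·(−100, 1), the first entry of a_n^t strictly dominates the second in absolute value for both workers (|a_n^t[1]| = 100c > (t+1)c = |a_n^t[2]|), the aggregated sparsified gradient satisfies g^t = 0, and ε_n^{t+1} = (0, −(t+1)c). Consequently w^t = (0, 1) and F(w^t) = log(1 + e^{−1}) for all 0 ≤ t ≤ 99, where F = (F_1 + F_2)/2. -/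

import Mathlib

/-!
At `w = (0, 1)` both margins `⟨w, x_n⟩` equal `1`, so the local gradients are `-c (±100, 1)`.
The error memory only ever holds the unselected second coordinate, which grows by `-c` per
round; as long as `(t + 1) c < 100 c`, Top-1 therefore selects the first coordinates `∓100 c`
of the two workers, and these cancel in the average. The model never moves, so the gradients
stay the same and the argument repeats.
-/

theorem topOne_mask_eq_single {ι : Type*} [Fintype ι] [DecidableEq ι] {s v : ι → ℝ}
    (h01 : ∀ i, s i = 0 ∨ s i = 1) (hsum : ∑ i, s i = 1)
    (htop : ∀ i, s i = 1 → ∀ j, |v j| ≤ |v i|) {i₀ : ι} (hdom : ∀ j ≠ i₀, |v j| < |v i₀|) :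
    s = Pi.single i₀ 1 := by
  have hoff : ∀ j ≠ i₀, s j = 0 := fun j hj =>
    (h01 j).resolve_right fun h1 => (htop j h1 i₀).not_gt (hdom j hj)
  have hon : s i₀ = 1 := by
    rwa [Finset.sum_eq_single i₀ (fun j _ hj => hoff j hj) (by simp)] at hsum
  funext j
  rcases eq_or_ne j i₀ with rfl | hj
  · simp [hon]
  · simp [hoff j hj, hj]

theorem sum_zero_one_mul (x : Fin 2 → ℝ) : ∑ i, (![0, 1] : Fin 2 → ℝ) i * x i = x 1 := by
  simp [Fin.sum_univ_two]

theorem topOne_errorFeedback_step {c : ℝ} {t : ℕ} {x s a : Fin 2 → ℝ} (hc : 0 < c)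
    (hx : x 1 = 1) (hdom : (t : ℝ) + 1 < |x 0|) (ha : a = ![0, -(t * c)] + (-c) • x)
    (h01 : ∀ i, s i = 0 ∨ s i = 1) (hsum : ∑ i, s i = 1)
    (htop : ∀ i, s i = 1 → ∀ j, |a j| ≤ |a i|) :
    |a 0| = |x 0| * c ∧ |a 1| = (t + 1) * c ∧
      (fun i => s i * a i) = ![-(c * x 0), 0] ∧
      a - (fun i => s i * a i) = ![0, -((t + 1) * c)] := by
  have ha' : a = ![-(c * x 0), -((t + 1) * c)] := by
    rw [ha]
    ext i
    fin_cases i <;> simp [hx]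
    ring
  have habs0 : |a 0| = |x 0| * c := by simp [ha', abs_mul, abs_of_pos hc, mul_comm]
  have habs1 : |a 1| = (t + 1) * c := by
    rw [ha']
    simp only [Matrix.cons_val_one, Matrix.cons_val_zero, abs_neg]
    exact abs_of_pos (by positivity)
  have hs : s = Pi.single 0 1 := by
    refine topOne_mask_eq_single h01 hsum htop fun j hj => ?_
    obtain rfl : j = 1 := by fin_cases j <;> simp_all
    rw [habs0, habs1]
    gcongr
  refine ⟨habs0, habs1, ?_, ?_⟩ <;> ext i <;> fin_cases i <;> simp [hs, ha']

theorem stmt5_general (η : ℝ)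
    (x : Fin 2 → Fin 2 → ℝ) (hx0 : x 0 = ![100, 1]) (hx1 : x 1 = ![-100, 1])
    (c : ℝ) (hc : c = Real.exp (-1) / (1 + Real.exp (-1)))
    (gradF : Fin 2 → (Fin 2 → ℝ) → (Fin 2 → ℝ))
    (hgrad : ∀ n w, gradF n w =
      -(Real.exp (-∑ i, w i * x n i) / (1 + Real.exp (-∑ i, w i * x n i))) • x n)
    (F : (Fin 2 → ℝ) → ℝ)
    (hF : ∀ w, F w = (Real.log (1 + Real.exp (-∑ i, w i * x 0 i))
                    + Real.log (1 + Real.exp (-∑ i, w i * x 1 i))) / 2)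
    (w : ℕ → Fin 2 → ℝ) (g : ℕ → Fin 2 → ℝ)
    (a eps ghat s : Fin 2 → ℕ → Fin 2 → ℝ)
    (hw0 : w 0 = ![0, 1])
    (heps0 : ∀ n, eps n 0 = 0)
    (ha : ∀ n t, a n t = eps n t + gradF n (w t))
    (hs01 : ∀ n t i, s n t i = 0 ∨ s n t i = 1)
    (hsone : ∀ n t, ∑ i, s n t i = 1)
    (hstop : ∀ n t i, s n t i = 1 → ∀ i', |a n t i'| ≤ |a n t i|)
    (hghat : ∀ n t, ghat n t = fun i => s n t i * a n t i)
    (hepsrec : ∀ n t, eps n (t + 1) = a n t - ghat n t)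
    (hg : ∀ t, g t = (2⁻¹ : ℝ) • (ghat 0 t + ghat 1 t))
    (hwrec : ∀ t, w (t + 1) = w t - η • g t) :
    (∀ t : ℕ, t ≤ 98 →
      w t = ![0, 1] ∧
      gradF 0 (w t) = (-c) • ![(100 : ℝ), 1] ∧
      gradF 1 (w t) = (-c) • ![(-100 : ℝ), 1] ∧
      (∀ n, |a n t 0| = 100 * c ∧ |a n t 1| = ((t : ℝ) + 1) * c ∧
        ((t : ℝ) + 1) * c < 100 * c) ∧
      g t = 0 ∧
      (∀ n, eps n (t + 1) = ![0, -(((t : ℝ) + 1) * c)])) ∧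
    (∀ t : ℕ, t ≤ 99 →
      w t = ![0, 1] ∧ F (w t) = Real.log (1 + Real.exp (-1))) := by
  have hc0 : 0 < c := hc ▸ by positivity
  have hx : ∀ n, x n 1 = 1 ∧ |x n 0| = 100 := by
    intro n
    fin_cases n <;> simp [hx0, hx1]
  have hgradw : ∀ n, gradF n ![0, 1] = (-c) • x n := fun n => by
    rw [hgrad, sum_zero_one_mul, (hx n).1, hc]
  have step : ∀ t ≤ 98, w t = ![0, 1] → (∀ n, eps n t = ![0, -(t * c)]) →
      g t = 0 ∧ ∀ n, (|a n t 0| = 100 * c ∧ |a n t 1| = (t + 1) * c) ∧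
        eps n (t + 1) = ![0, -((t + 1) * c)] := by
    intro t ht hw he
    have worker n := topOne_errorFeedback_step hc0 (hx n).1
      (by rw [(hx n).2]; exact_mod_cast (by omega : t + 1 < 100))
      (by rw [ha, he, hw, hgradw]) (hs01 n t) (hsone n t) (hstop n t)
    refine ⟨?_, fun n => ⟨⟨by rw [(worker n).1, (hx n).2], (worker n).2.1⟩, ?_⟩⟩
    · rw [hg, hghat, hghat, (worker 0).2.2.1, (worker 1).2.2.1, hx0, hx1]
      ext i
      fin_cases i <;> simp
    · rw [hepsrec, hghat, (worker n).2.2.2]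
  have inv : ∀ t ≤ 99, w t = ![0, 1] ∧ ∀ n, eps n t = ![0, -(t * c)] := by
    intro t ht
    induction t with
    | zero => exact ⟨hw0, fun n => by rw [heps0]; ext i; fin_cases i <;> simp⟩
    | succ t ih =>
      obtain ⟨hw, he⟩ := ih (by omega)
      obtain ⟨hgt, hworker⟩ := step t (by omega) hw he
      exact ⟨by rw [hwrec, hgt, smul_zero, sub_zero, hw],
        fun n => by rw [(hworker n).2]; push_cast; rfl⟩
  refine ⟨fun t ht => ?_, fun t ht => ?_⟩
  · obtain ⟨hw, he⟩ := inv t (by omega)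
    obtain ⟨hgt, hworker⟩ := step t ht hw he
    have hlt : ((t : ℝ) + 1) * c < 100 * c := by
      gcongr
      exact_mod_cast (by omega : t + 1 < 100)
    exact ⟨hw, by rw [hw, hgradw, hx0], by rw [hw, hgradw, hx1],
      fun n => ⟨(hworker n).1.1, (hworker n).1.2, hlt⟩, hgt, fun n => (hworker n).2⟩
  · obtain ⟨hw, -⟩ := inv t ht
    exact ⟨hw, by rw [hF, hw, sum_zero_one_mul, sum_zero_one_mul, (hx 0).1, (hx 1).1]; ring⟩

/-- The toy example: with data points `x₁ = (100, 1)`, `x₂ = (-100, 1)`, logistic losses,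
learning rate `η > 0` and initialization `w⁰ = (0, 1)`, Top-1 sparsified gradient descent
with error accumulation stalls: for `t ≤ 98` the model stays at `(0,1)`, the local gradients
are `∓c·(±100, 1)`, the first coordinate of each accumulated gradient strictly dominates,
the aggregated sparsified gradient vanishes, and the error grows linearly in the second
coordinate; consequently `w^t = (0,1)` and `F(w^t) = log(1 + e⁻¹)` for all `t ≤ 99`. -/
theorem stmt5 (η : ℝ) (hη : 0 < η)
    (x : Fin 2 → Fin 2 → ℝ) (hx0 : x 0 = ![100, 1]) (hx1 : x 1 = ![-100, 1])
    (c : ℝ) (hc : c = Real.exp (-1) / (1 + Real.exp (-1)))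
    (gradF : Fin 2 → (Fin 2 → ℝ) → (Fin 2 → ℝ))
    (hgrad : ∀ n w, gradF n w =
      -(Real.exp (-∑ i, w i * x n i) / (1 + Real.exp (-∑ i, w i * x n i))) • x n)
    (F : (Fin 2 → ℝ) → ℝ)
    (hF : ∀ w, F w = (Real.log (1 + Real.exp (-∑ i, w i * x 0 i))
                    + Real.log (1 + Real.exp (-∑ i, w i * x 1 i))) / 2)
    (w : ℕ → Fin 2 → ℝ) (g : ℕ → Fin 2 → ℝ)
    (a eps ghat s : Fin 2 → ℕ → Fin 2 → ℝ)
    (hw0 : w 0 = ![0, 1])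
    (heps0 : ∀ n, eps n 0 = 0)
    (ha : ∀ n t, a n t = eps n t + gradF n (w t))
    (hs01 : ∀ n t i, s n t i = 0 ∨ s n t i = 1)
    (hsone : ∀ n t, ∑ i, s n t i = 1)
    (hstop : ∀ n t i, s n t i = 1 → ∀ i', |a n t i'| ≤ |a n t i|)
    (hghat : ∀ n t, ghat n t = fun i => s n t i * a n t i)
    (hepsrec : ∀ n t, eps n (t + 1) = a n t - ghat n t)
    (hg : ∀ t, g t = (2⁻¹ : ℝ) • (ghat 0 t + ghat 1 t))
    (hwrec : ∀ t, w (t + 1) = w t - η • g t) :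
    (∀ t : ℕ, t ≤ 98 →
      w t = ![0, 1] ∧
      gradF 0 (w t) = (-c) • ![(100 : ℝ), 1] ∧
      gradF 1 (w t) = (-c) • ![(-100 : ℝ), 1] ∧
      (∀ n, |a n t 0| = 100 * c ∧ |a n t 1| = ((t : ℝ) + 1) * c ∧
        ((t : ℝ) + 1) * c < 100 * c) ∧
      g t = 0 ∧
      (∀ n, eps n (t + 1) = ![0, -(((t : ℝ) + 1) * c)])) ∧
    (∀ t : ℕ, t ≤ 99 →
      w t = ![0, 1] ∧ F (w t) = Real.log (1 + Real.exp (-1))) :=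
  stmt5_general η x hx0 hx1 c hc gradF hgrad F hF w g a eps ghat s hw0 heps0 ha hs01 hsone hstop
    hghat hepsrec hg hwrec
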